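/- (Simultaneous multiplication formula.) Let n ≥ 2 be an integer, ε_n = e^{2πi/n}, let K : ℤ → ℂ be an n-periodic sequence with C_k = Σ_{j=0}^{n-1} K_j ε_n^{kj}, let r, p ∈ ℤ, q ∈ ℂ, λ ∈ ℂ with λ^n ≠ 1, and let m ≥ 1 be an integer. Then (-1)^{p-1} m · E_{m,n}^{r,p}(nq,λ;C) = C_0 · B_m(nq,λ) - n^m Σ_{j=0}^{n-1} K_{j-r-p+1} λ^j B_m(q + j/n, λ^n). -/

import Mathlib

open Finset

/-- `eps n = e^{2πi/n}`, a primitive `n`-th root of unity in `ℂ`. -/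
noncomputable def eps (n : ℕ) : ℂ := Complex.exp (2 * Real.pi * Complex.I / n)

/-- `expPS q = e^{qt} = Σ_j q^j t^j / j!` as a formal power series in `ℂ[[t]]`. -/
noncomputable def expPS (q : ℂ) : PowerSeries ℂ :=
  PowerSeries.mk fun j => q ^ j / j.factorial

/-- The Dedekind sum
`E_{m,n}^{r,p}(q,λ;C) = Σ_{k=1}^{n-1} ε_n^{-kr} H_{m-1}^{(p)}(q,λ,ε_n^{-k}) C_{-k} / (1-ε_n^k)^p`,
where `H p m q λ γ` denotes the generalized Frobenius–Euler polynomial `H_m^{(p)}(q,λ,γ)`. -/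
noncomputable def dedekindE (H : ℤ → ℕ → ℂ → ℂ → ℂ → ℂ) (n m : ℕ) (r p : ℤ)
    (q lam : ℂ) (Cf : ℤ → ℂ) : ℂ :=
  ∑ k ∈ Finset.Ico 1 n,
    eps n ^ (-(k : ℤ) * r) * H p (m - 1) q lam (eps n ^ (-(k : ℤ))) * Cf (-(k : ℤ))
      / (1 - eps n ^ (k : ℤ)) ^ p


section Aux
open PowerSeries

lemma expPS_eq_rescale (q : ℂ) : expPS q = rescale q (PowerSeries.exp ℂ) := by
  ext j
  simp [expPS, PowerSeries.exp, algebraMap, div_eq_mul_inv]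

lemma expPS_mul (a b : ℂ) : expPS a * expPS b = expPS (a + b) := by
  simp only [expPS_eq_rescale]; exact PowerSeries.exp_mul_exp_eq_exp_add a b

lemma expPS_zero : expPS 0 = 1 := by
  ext j
  simp [expPS]
  rcases j with _ | j <;> simp

lemma expPS_pow (j : ℕ) : expPS 1 ^ j = expPS j := by
  induction j with
  | zero => simpa using expPS_zero.symm
  | succ j ih => rw [pow_succ, ih, expPS_mul]; norm_num

lemma rescale_expPS (a b : ℂ) : rescale b (expPS a) = expPS (a * b) := by
  rw [expPS_eq_rescale, rescale_rescale, expPS_eq_rescale]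

lemma constantCoeff_expPS (a : ℂ) : PowerSeries.constantCoeff (expPS a) = 1 := by
  simp [expPS, ← PowerSeries.coeff_zero_eq_constantCoeff]

lemma eps_prim {n : ℕ} (hn : 2 ≤ n) : IsPrimitiveRoot (eps n) n := by
  have : n ≠ 0 := by omega
  simpa [eps] using Complex.isPrimitiveRoot_exp n this

lemma eps_pow_n {n : ℕ} (hn : 2 ≤ n) : eps n ^ (n : ℤ) = 1 := by
  rw [zpow_natCast]; exact (eps_prim hn).pow_eq_one

lemma eps_zpow_pow_n {n : ℕ} (hn : 2 ≤ n) (s : ℤ) : (eps n ^ s) ^ n = 1 := by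
  rw [← zpow_natCast, ← zpow_mul, mul_comm, zpow_mul, eps_pow_n hn, one_zpow]

lemma eps_ne_zero {n : ℕ} : eps n ≠ 0 := Complex.exp_ne_zero _

lemma eps_zpow_ne_one {n : ℕ} (hn : 2 ≤ n) {k : ℕ} (hk1 : 1 ≤ k) (hkn : k < n) :
    eps n ^ (k : ℤ) ≠ 1 := by
  rw [zpow_natCast]
  exact (eps_prim hn).pow_ne_one_of_pos_of_lt (by omega) hkn

lemma eps_zpow_neg_ne_one {n : ℕ} (hn : 2 ≤ n) {k : ℕ} (hk1 : 1 ≤ k) (hkn : k < n) :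
    eps n ^ (-(k : ℤ)) ≠ 1 := by
  intro h
  apply eps_zpow_ne_one hn hk1 hkn
  have h2 : eps n ^ (-(k:ℤ)) * eps n ^ (k:ℤ) = 1 := by
    rw [← zpow_add₀ (eps_ne_zero (n := n))]; simp
  rw [h, one_mul] at h2
  exact h2

lemma eps_geom {n : ℕ} (hn : 2 ≤ n) (s : ℤ) :
    ∑ k ∈ range n, eps n ^ ((k : ℤ) * s) = if (n : ℤ) ∣ s then (n : ℂ) else 0 := by
  have h0 : ∀ k : ℕ, eps n ^ ((k:ℤ) * s) = (eps n ^ s) ^ k := by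
    intro k; rw [mul_comm, zpow_mul, zpow_natCast]
  simp only [h0]
  split_ifs with hd
  · obtain ⟨t, rfl⟩ := hd
    have h1 : eps n ^ ((n : ℤ) * t) = 1 := by rw [zpow_mul, eps_pow_n hn, one_zpow]
    simp [h1]
  · have hne : eps n ^ s ≠ 1 := by
      intro h
      exact hd (((eps_prim hn).zpow_eq_one_iff_dvd s).mp h)
    rw [geom_sum_eq hne, eps_zpow_pow_n hn]
    simp

lemma Kper {n : ℕ} (K : ℤ → ℂ) (hK : ∀ j : ℤ, K (j + n) = K j) :
    ∀ c d : ℤ, (n : ℤ) ∣ (c - d) → K c = K d := by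
  have h1 : ∀ (t : ℤ) (c : ℤ), K (c + n * t) = K c := by
    intro t
    induction t using Int.induction_on with
    | zero => simp
    | succ t ih =>
      intro c
      have := hK (c + n * t)
      rw [mul_add, mul_one, ← add_assoc]
      rw [this, ih]
    | pred t ih =>
      intro c
      have h2 := hK (c + n * (-(t:ℤ) - 1))
      rw [show c + (n:ℤ) * (-(t:ℤ) - 1) + ↑n = c + ↑n * (-(t:ℤ)) by ring] at h2
      exact h2.symm.trans (ih c)
  intro c d ⟨t, ht⟩
  have : c = d + n * t := by omega
  rw [this, h1 t d]

lemma Pk_mul_Sk {n : ℕ} (hn : 2 ≤ n) (k : ℕ) (x : PowerSeries ℂ) :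
    (x - PowerSeries.C (eps n ^ (-(k:ℤ)))) *
      ∑ a ∈ range n, PowerSeries.C (eps n ^ ((k:ℤ) * (a+1))) * x ^ a = x ^ n - 1 := by
  set y : PowerSeries ℂ := PowerSeries.C (eps n ^ (-(k:ℤ))) with hy
  have key : ∀ a ∈ range n,
      PowerSeries.C (eps n ^ ((k:ℤ) * (a+1))) * x ^ a = x ^ a * y ^ (n - 1 - a) := by
    intro a ha
    have han : a < n := mem_range.mp ha
    have hcast : ((n - 1 - a : ℕ) : ℤ) = (n : ℤ) - 1 - a := by omega
    have hsc : eps n ^ ((k:ℤ) * (a+1)) = (eps n ^ (-(k:ℤ))) ^ (n - 1 - a : ℕ) := by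
      rw [← zpow_natCast (eps n ^ (-(k:ℤ))), ← zpow_mul, hcast]
      rw [show (-(k:ℤ)) * ((n:ℤ) - 1 - a) = (n:ℤ) * (-(k:ℤ)) + (k:ℤ) * (a+1) by ring]
      rw [zpow_add₀ (eps_ne_zero (n := n)), zpow_mul (eps n) (n:ℤ) (-(k:ℤ)), eps_pow_n hn, one_zpow, one_mul]
    rw [mul_comm, hy, ← map_pow, ← hsc]
  rw [Finset.sum_congr rfl key, mul_comm, geom_sum₂_mul]
  have : y ^ n = 1 := by rw [hy, ← map_pow, eps_zpow_pow_n hn, map_one]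
  rw [this]

lemma star_scalar {n : ℕ} (hn : 2 ≤ n) (K : ℤ → ℂ) (hK : ∀ j : ℤ, K (j + n) = K j)
    (Cf : ℤ → ℂ) (hCf : ∀ k : ℤ, Cf k = ∑ j ∈ range n, K j * eps n ^ (k * j))
    (r p : ℤ) (a : ℕ) :
    ∑ k ∈ range n, eps n ^ (-(k:ℤ) * (r + p)) * Cf (-(k:ℤ)) * eps n ^ ((k:ℤ) * (a + 1))
      = (n : ℂ) * K ((a : ℤ) - r - p + 1) := by
  have step1 : ∀ k ∈ range n,
      eps n ^ (-(k:ℤ) * (r + p)) * Cf (-(k:ℤ)) * eps n ^ ((k:ℤ) * (a + 1))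
        = ∑ i ∈ range n, K i * eps n ^ ((k:ℤ) * ((a:ℤ) + 1 - r - p - i)) := by
    intro k _
    rw [hCf (-(k:ℤ)), Finset.mul_sum, Finset.sum_mul]
    refine Finset.sum_congr rfl fun i _ => ?_
    rw [show eps n ^ (-(k:ℤ) * (r + p)) * (K i * eps n ^ ((-(k:ℤ)) * i)) *
          eps n ^ ((k:ℤ) * ((a:ℤ) + 1))
        = K i * (eps n ^ (-(k:ℤ) * (r + p)) * eps n ^ ((-(k:ℤ)) * i) *
            eps n ^ ((k:ℤ) * ((a:ℤ) + 1))) by ring]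
    congr 1
    rw [← zpow_add₀ (eps_ne_zero (n := n)), ← zpow_add₀ (eps_ne_zero (n := n))]
    congr 1
    ring
  rw [Finset.sum_congr rfl step1, Finset.sum_comm]
  have step2 : ∀ i ∈ range n,
      ∑ k ∈ range n, K i * eps n ^ ((k:ℤ) * ((a:ℤ) + 1 - r - p - i))
        = K i * (if (n:ℤ) ∣ ((a:ℤ) + 1 - r - p - i) then (n:ℂ) else 0) := by
    intro i _
    rw [← Finset.mul_sum, eps_geom hn]
  rw [Finset.sum_congr rfl step2]
  set i0 : ℕ := (((a:ℤ) + 1 - r - p) % n).toNat with hi0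
  have hn0 : (0:ℤ) < (n:ℤ) := by exact_mod_cast (by omega : 0 < n)
  have hmod := Int.emod_emod_of_dvd ((a:ℤ) + 1 - r - p) (dvd_refl (n:ℤ))
  have hlt : ((a:ℤ) + 1 - r - p) % n < n := Int.emod_lt_of_pos _ hn0
  have hge : 0 ≤ ((a:ℤ) + 1 - r - p) % n := Int.emod_nonneg _ (by omega)
  have hi0n : i0 < n := by omega
  have hi0v : (i0 : ℤ) = ((a:ℤ) + 1 - r - p) % n := by omega
  have hdvd0 : (n:ℤ) ∣ ((a:ℤ) + 1 - r - p - i0) := by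
    rw [hi0v]
    exact Int.dvd_self_sub_of_emod_eq rfl
  rw [Finset.sum_eq_single i0]
  · rw [if_pos hdvd0]
    rw [Kper K hK (i0 : ℤ) ((a:ℤ) - r - p + 1) (by
      obtain ⟨t, ht⟩ := hdvd0
      exact ⟨-t, by rw [mul_neg]; omega⟩)]
    ring
  · intro i hi hne
    have hin : i < n := mem_range.mp hi
    rw [if_neg, mul_zero]
    intro hdvd
    apply hne
    have hd2 : (n:ℤ) ∣ ((i:ℤ) - (i0:ℤ)) := by
      have h := dvd_sub hdvd0 hdvd
      rwa [show ((a:ℤ) + 1 - r - p - i0) - ((a:ℤ) + 1 - r - p - i) = (i:ℤ) - i0 by ring] at h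
    by_contra hne2
    have hz : (i:ℤ) - i0 ≠ 0 := by omega
    have hle : (n:ℤ) ≤ |(i:ℤ) - i0| :=
      Int.le_of_dvd (abs_pos.mpr hz) ((dvd_abs _ _).mpr hd2)
    have habs : |(i:ℤ) - i0| < n := abs_sub_lt_iff.mpr ⟨by omega, by omega⟩
    linarith
  · intro h
    exact absurd (mem_range.mpr hi0n) h

lemma rescale_C' (a b : ℂ) : PowerSeries.rescale a (PowerSeries.C b) = PowerSeries.C b := by
  ext j
  simp only [coeff_rescale, PowerSeries.coeff_C]
  split_ifs with h <;> simp [h]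

lemma dscalar {n : ℕ} (hn : 2 ≤ n) {k : ℕ} (hk1 : 1 ≤ k) (hkn : k < n) (r p : ℤ) (c : ℂ) :
    (eps n ^ (-(k:ℤ) * r) * c / (1 - eps n ^ (k:ℤ)) ^ p * (-1:ℂ) ^ (p-1)) *
        (1 - eps n ^ (-(k:ℤ))) ^ p
      = -(eps n ^ (-(k:ℤ) * (r + p)) * c) := by
  have hz0 : eps n ^ (-(k:ℤ)) ≠ 0 := zpow_ne_zero _ (eps_ne_zero (n := n))
  have hw1 : (1:ℂ) - eps n ^ (k:ℤ) ≠ 0 :=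
    sub_ne_zero.mpr (Ne.symm (eps_zpow_ne_one hn hk1 hkn))
  have hinv : eps n ^ (-(k:ℤ)) * eps n ^ ((k:ℤ)) = 1 := by
    rw [← zpow_add₀ (eps_ne_zero (n := n))]; simp
  have hfact : (1:ℂ) - eps n ^ (-(k:ℤ)) = (-(eps n ^ (-(k:ℤ)))) * (1 - eps n ^ (k:ℤ)) := by
    linear_combination -hinv
  rw [hfact, mul_zpow]
  have hm1 : ((-1:ℂ)) ^ (p-1) * ((-(eps n ^ (-(k:ℤ))))) ^ p = -(eps n ^ (-(k:ℤ) * p)) := by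
    rw [neg_eq_neg_one_mul (eps n ^ (-(k:ℤ))), mul_zpow, ← zpow_mul]
    have h2 : ((-1:ℂ)) ^ (p-1) * ((-1:ℂ)) ^ p = -1 := by
      rw [← zpow_add₀ (by norm_num : (-1:ℂ) ≠ 0)]
      exact Odd.neg_one_zpow ⟨p - 1, by ring⟩
    calc ((-1:ℂ)) ^ (p-1) * ((-1:ℂ) ^ p * eps n ^ (-(k:ℤ) * p))
        = (((-1:ℂ)) ^ (p-1) * (-1:ℂ) ^ p) * eps n ^ (-(k:ℤ) * p) := by ring
      _ = -(eps n ^ (-(k:ℤ) * p)) := by rw [h2]; ring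
  have hWp : ((1:ℂ) - eps n ^ (k:ℤ)) ^ p ≠ 0 := zpow_ne_zero _ hw1
  calc eps n ^ (-(k:ℤ) * r) * c / (1 - eps n ^ (k:ℤ)) ^ p * (-1:ℂ) ^ (p-1) *
          ((-(eps n ^ (-(k:ℤ)))) ^ p * (1 - eps n ^ (k:ℤ)) ^ p)
      = (eps n ^ (-(k:ℤ) * r) * ((-1:ℂ) ^ (p-1) * (-(eps n ^ (-(k:ℤ)))) ^ p)) * c *
          (((1 - eps n ^ (k:ℤ)) ^ p)⁻¹ * (1 - eps n ^ (k:ℤ)) ^ p) := by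
        rw [div_eq_mul_inv]; ring
    _ = (eps n ^ (-(k:ℤ) * r) * -(eps n ^ (-(k:ℤ) * p))) * c * 1 := by
        rw [hm1, inv_mul_cancel₀ hWp]
    _ = -(eps n ^ (-(k:ℤ) * (r + p)) * c) := by
        rw [show -(k:ℤ) * (r + p) = -(k:ℤ) * r + -(k:ℤ) * p by ring,
          zpow_add₀ (eps_ne_zero (n := n))]
        ring

lemma star {n : ℕ} (hn : 2 ≤ n) (K : ℤ → ℂ) (hK : ∀ j : ℤ, K (j + n) = K j)
    (Cf : ℤ → ℂ) (hCf : ∀ k : ℤ, Cf k = ∑ j ∈ range n, K j * eps n ^ (k * j))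
    (r p : ℤ) (x : PowerSeries ℂ) :
    ∑ k ∈ range n, PowerSeries.C (eps n ^ (-(k:ℤ) * (r + p)) * Cf (-(k:ℤ))) *
        (∑ a ∈ range n, PowerSeries.C (eps n ^ ((k:ℤ) * (a + 1))) * x ^ a)
      = PowerSeries.C (n : ℂ) *
          ∑ a ∈ range n, PowerSeries.C (K ((a : ℤ) - r - p + 1)) * x ^ a := by
  simp_rw [Finset.mul_sum]
  rw [Finset.sum_comm]
  refine Finset.sum_congr rfl fun a _ => ?_
  have h1 : ∀ k ∈ range n,
      PowerSeries.C (eps n ^ (-(k:ℤ) * (r + p)) * Cf (-(k:ℤ))) *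
          (PowerSeries.C (eps n ^ ((k:ℤ) * (a + 1))) * x ^ a)
        = PowerSeries.C (eps n ^ (-(k:ℤ) * (r + p)) * Cf (-(k:ℤ)) *
            eps n ^ ((k:ℤ) * (a + 1))) * x ^ a := by
    intro k _
    simp only [map_mul]
    ring
  rw [Finset.sum_congr rfl h1, ← Finset.sum_mul, ← map_sum,
    star_scalar hn K hK Cf hCf r p a, map_mul]
  ring

noncomputable def Sser (n : ℕ) (x : PowerSeries ℂ) (k : ℕ) : PowerSeries ℂ :=
  ∑ a ∈ range n, PowerSeries.C (eps n ^ ((k:ℤ) * (a + 1))) * x ^ a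

lemma Pk_mul_Sser {n : ℕ} (hn : 2 ≤ n) (k : ℕ) (x : PowerSeries ℂ) :
    (x - PowerSeries.C (eps n ^ (-(k:ℤ)))) * Sser n x k = x ^ n - 1 :=
  Pk_mul_Sk hn k x

lemma star' {n : ℕ} (hn : 2 ≤ n) (K : ℤ → ℂ) (hK : ∀ j : ℤ, K (j + n) = K j)
    (Cf : ℤ → ℂ) (hCf : ∀ k : ℤ, Cf k = ∑ j ∈ range n, K j * eps n ^ (k * j))
    (r p : ℤ) (x : PowerSeries ℂ) :
    ∑ k ∈ range n, PowerSeries.C (eps n ^ (-(k:ℤ) * (r + p)) * Cf (-(k:ℤ))) * Sser n x k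
      = PowerSeries.C (n : ℂ) *
          ∑ a ∈ range n, PowerSeries.C (K ((a : ℤ) - r - p + 1)) * x ^ a :=
  star hn K hK Cf hCf r p x

lemma core {n : ℕ} (hn : 2 ≤ n) (K : ℤ → ℂ) (hK : ∀ j : ℤ, K (j + n) = K j)
    (Cf : ℤ → ℂ) (hCf : ∀ k : ℤ, Cf k = ∑ j ∈ range n, K j * eps n ^ (k * j))
    (H : ℤ → ℕ → ℂ → ℂ → ℂ → ℂ)
    (hH : ∀ (p : ℤ) (q lam γ : ℂ), γ ≠ 1 → lam ≠ γ →
      (PowerSeries.C lam * expPS 1 - PowerSeries.C γ) *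
          PowerSeries.mk (fun m => H p m q lam γ / m.factorial)
        = PowerSeries.C ((1 - γ) ^ p) * expPS q)
    (B : ℕ → ℂ → ℂ → ℂ)
    (hB : ∀ (q lam : ℂ), lam ≠ 1 →
      (PowerSeries.C lam * expPS 1 - 1) *
          PowerSeries.mk (fun m => B m q lam / m.factorial)
        = PowerSeries.X * expPS q)
    (r p : ℤ) (q lam : ℂ) (hlam : lam ^ n ≠ 1) :
    ∑ k ∈ Finset.Ico 1 n,
        PowerSeries.C (eps n ^ (-(k:ℤ) * r) * Cf (-(k:ℤ)) / (1 - eps n ^ (k:ℤ)) ^ p *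
            (-1:ℂ) ^ (p-1)) *
          (PowerSeries.X *
            PowerSeries.mk (fun m => H p m ((n:ℂ) * q) lam (eps n ^ (-(k:ℤ))) / m.factorial))
      = PowerSeries.C (Cf 0) * PowerSeries.mk (fun m => B m ((n:ℂ) * q) lam / m.factorial)
        - ∑ j ∈ range n, PowerSeries.C (K ((j:ℤ) - r - p + 1) * lam ^ j) *
            PowerSeries.rescale (n:ℂ)
              (PowerSeries.mk (fun m => B m (q + j / n) (lam ^ n) / m.factorial)) := by
  have hn0 : (n:ℂ) ≠ 0 := Nat.cast_ne_zero.mpr (by omega)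
  have hlam1 : lam ≠ 1 := fun h => hlam (by rw [h, one_pow])
  have hlamζ : ∀ k : ℕ, lam ≠ eps n ^ (-(k:ℤ)) := fun k h =>
    hlam (by rw [h, eps_zpow_pow_n hn])
  set x : PowerSeries ℂ := PowerSeries.C lam * expPS 1 with hx
  set Q : PowerSeries ℂ := x ^ n - 1 with hQ
  have hQne : Q ≠ 0 := by
    intro h0
    have h1 := congrArg (PowerSeries.constantCoeff) h0
    simp only [hQ, hx, map_sub, map_pow, map_mul, map_one,
      PowerSeries.constantCoeff_C, constantCoeff_expPS, mul_one, map_zero] at h1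
    exact hlam (by linear_combination h1)
  apply mul_left_cancel₀ hQne
  have hPS : ∀ k : ℕ, (x - PowerSeries.C (eps n ^ (-(k:ℤ)))) * Sser n x k = Q :=
    fun k => Pk_mul_Sser hn k x
  -- left side
  have hQSL : Q * (∑ k ∈ Finset.Ico 1 n,
        PowerSeries.C (eps n ^ (-(k:ℤ) * r) * Cf (-(k:ℤ)) / (1 - eps n ^ (k:ℤ)) ^ p *
            (-1:ℂ) ^ (p-1)) *
          (PowerSeries.X *
            PowerSeries.mk (fun m => H p m ((n:ℂ) * q) lam (eps n ^ (-(k:ℤ))) / m.factorial)))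
      = (PowerSeries.X * expPS ((n:ℂ) * q)) *
          ∑ k ∈ Finset.Ico 1 n,
            PowerSeries.C (-(eps n ^ (-(k:ℤ) * (r+p)) * Cf (-(k:ℤ)))) * Sser n x k := by
    rw [Finset.mul_sum, Finset.mul_sum]
    refine Finset.sum_congr rfl fun k hk => ?_
    obtain ⟨hk1, hkn⟩ := Finset.mem_Ico.mp hk
    have h1 := hH p ((n:ℂ) * q) lam (eps n ^ (-(k:ℤ)))
      (eps_zpow_neg_ne_one hn hk1 hkn) (hlamζ k)
    rw [← hx] at h1
    calc Q * (PowerSeries.C (eps n ^ (-(k:ℤ) * r) * Cf (-(k:ℤ)) /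
            (1 - eps n ^ (k:ℤ)) ^ p * (-1:ℂ) ^ (p-1)) *
          (PowerSeries.X *
            PowerSeries.mk (fun m => H p m ((n:ℂ) * q) lam (eps n ^ (-(k:ℤ))) / m.factorial)))
        = PowerSeries.C (eps n ^ (-(k:ℤ) * r) * Cf (-(k:ℤ)) /
            (1 - eps n ^ (k:ℤ)) ^ p * (-1:ℂ) ^ (p-1)) * PowerSeries.X *
            (Sser n x k * ((x - PowerSeries.C (eps n ^ (-(k:ℤ)))) *
              PowerSeries.mk (fun m => H p m ((n:ℂ) * q) lam (eps n ^ (-(k:ℤ))) /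
                m.factorial))) := by
          rw [← hPS k]; ring
      _ = PowerSeries.C (eps n ^ (-(k:ℤ) * r) * Cf (-(k:ℤ)) /
            (1 - eps n ^ (k:ℤ)) ^ p * (-1:ℂ) ^ (p-1)) * PowerSeries.X *
            (Sser n x k * (PowerSeries.C ((1 - eps n ^ (-(k:ℤ))) ^ p) *
              expPS ((n:ℂ) * q))) := by rw [h1]
      _ = (PowerSeries.X * expPS ((n:ℂ) * q)) *
            (PowerSeries.C ((eps n ^ (-(k:ℤ) * r) * Cf (-(k:ℤ)) /
              (1 - eps n ^ (k:ℤ)) ^ p * (-1:ℂ) ^ (p-1)) * (1 - eps n ^ (-(k:ℤ))) ^ p) *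
              Sser n x k) := by simp only [map_mul]; ring
      _ = (PowerSeries.X * expPS ((n:ℂ) * q)) *
            (PowerSeries.C (-(eps n ^ (-(k:ℤ) * (r+p)) * Cf (-(k:ℤ)))) * Sser n x k) := by
          rw [dscalar hn hk1 hkn r p (Cf (-(k:ℤ)))]
  -- k = 0 piece
  have heps0 : eps n ^ (-((0:ℕ):ℤ)) = 1 := by norm_num
  have hQbser : Q = (x - 1) * Sser n x 0 := by
    have := hPS 0
    rw [heps0, map_one] at this
    exact this.symm
  have hB0 := hB ((n:ℂ) * q) lam hlam1
  rw [← hx] at hB0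
  -- rescaled Bj equations
  have hQbj : ∀ j : ℕ, Q * PowerSeries.rescale (n:ℂ)
        (PowerSeries.mk (fun m => B m (q + j / n) (lam ^ n) / m.factorial))
      = (PowerSeries.X * expPS ((n:ℂ) * q)) * (PowerSeries.C (n:ℂ) * expPS 1 ^ j) := by
    intro j
    have h1 := congrArg (PowerSeries.rescale (n:ℂ)) (hB (q + j / n) (lam ^ n) hlam)
    rw [map_mul, map_sub, map_mul, map_one, rescale_C', rescale_expPS, one_mul,
      map_mul, PowerSeries.rescale_X, rescale_expPS] at h1
    have hq1 : (q + (j:ℂ) / n) * n = (n:ℂ) * q + j := by field_simp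
    rw [hq1] at h1
    have hQeq : Q = PowerSeries.C (lam ^ n) * expPS (n:ℂ) - 1 := by
      rw [hQ, hx, mul_pow, ← map_pow, expPS_pow]
    rw [hQeq, h1, ← expPS_mul, expPS_pow]
    ring
  -- assemble right side
  have hRight : ∀ j ∈ range n,
      Q * (PowerSeries.C (K ((j:ℤ) - r - p + 1) * lam ^ j) *
        PowerSeries.rescale (n:ℂ)
          (PowerSeries.mk (fun m => B m (q + j / n) (lam ^ n) / m.factorial)))
      = (PowerSeries.X * expPS ((n:ℂ) * q)) *
          (PowerSeries.C (K ((j:ℤ) - r - p + 1) * lam ^ j) *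
            (PowerSeries.C (n:ℂ) * expPS 1 ^ j)) := by
    intro j _
    rw [show Q * (PowerSeries.C (K ((j:ℤ) - r - p + 1) * lam ^ j) *
        PowerSeries.rescale (n:ℂ)
          (PowerSeries.mk (fun m => B m (q + j / n) (lam ^ n) / m.factorial)))
      = PowerSeries.C (K ((j:ℤ) - r - p + 1) * lam ^ j) *
        (Q * PowerSeries.rescale (n:ℂ)
          (PowerSeries.mk (fun m => B m (q + j / n) (lam ^ n) / m.factorial))) by ring,
      hQbj j]
    ring
  have hQb : Q * (PowerSeries.C (Cf 0) *
      PowerSeries.mk (fun m => B m ((n:ℂ) * q) lam / m.factorial))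
      = (PowerSeries.X * expPS ((n:ℂ) * q)) * (PowerSeries.C (Cf 0) * Sser n x 0) := by
    calc Q * (PowerSeries.C (Cf 0) *
        PowerSeries.mk (fun m => B m ((n:ℂ) * q) lam / m.factorial))
        = PowerSeries.C (Cf 0) * (Sser n x 0 * ((x - 1) *
            PowerSeries.mk (fun m => B m ((n:ℂ) * q) lam / m.factorial))) := by
          rw [hQbser]; ring
      _ = PowerSeries.C (Cf 0) * (Sser n x 0 * (PowerSeries.X * expPS ((n:ℂ) * q))) := by
          rw [hB0]
      _ = (PowerSeries.X * expPS ((n:ℂ) * q)) * (PowerSeries.C (Cf 0) * Sser n x 0) := by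
          ring
  rw [hQSL, mul_sub, hQb, Finset.mul_sum, Finset.mul_sum, Finset.sum_congr rfl hRight, ← Finset.mul_sum, ← Finset.mul_sum]
  -- now the star identity
  have hsplit := star' hn K hK Cf hCf r p x
  conv at hsplit => lhs; rw [Finset.range_eq_Ico, Finset.sum_eq_sum_Ico_succ_bot
    (show 0 < n by omega)]
  simp only [Nat.cast_zero, neg_zero, zero_mul, zpow_zero, one_mul, zero_add] at hsplit
  have hxpow : ∀ a : ℕ, x ^ a = PowerSeries.C (lam ^ a) * expPS 1 ^ a := by
    intro a
    rw [hx, mul_pow, map_pow]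
  have hRfin : PowerSeries.C (n:ℂ) *
        ∑ a ∈ range n, PowerSeries.C (K ((a:ℤ) - r - p + 1)) * x ^ a
      = ∑ j ∈ range n, PowerSeries.C (K ((j:ℤ) - r - p + 1) * lam ^ j) *
          (PowerSeries.C (n:ℂ) * expPS 1 ^ j) := by
    rw [Finset.mul_sum]
    refine Finset.sum_congr rfl fun a _ => ?_
    rw [hxpow a]
    simp only [map_mul]
    ring
  rw [hRfin] at hsplit
  have hneg : ∑ k ∈ Finset.Ico 1 n,
        PowerSeries.C (-(eps n ^ (-(k:ℤ) * (r+p)) * Cf (-(k:ℤ)))) * Sser n x k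
      = -∑ k ∈ Finset.Ico 1 n,
          PowerSeries.C (eps n ^ (-(k:ℤ) * (r+p)) * Cf (-(k:ℤ))) * Sser n x k := by
    rw [← Finset.sum_neg_distrib]
    exact Finset.sum_congr rfl fun k _ => by rw [map_neg, neg_mul]
  rw [hneg]
  linear_combination (-(PowerSeries.X * expPS ((n:ℂ) * q))) * hsplit

end Aux

/-- Simultaneous multiplication formula:
`(-1)^{p-1} m E_{m,n}^{r,p}(nq,λ;C)
  = C_0 B_m(nq,λ) - n^m Σ_{j=0}^{n-1} K_{j-r-p+1} λ^j B_m(q + j/n, λ^n)`,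
where `B m q λ` denotes the Apostol–Bernoulli polynomial `B_m(q,λ)`. -/
theorem simultaneous_multiplication_formula
    (n : ℕ) (hn : 2 ≤ n) (K : ℤ → ℂ) (hK : ∀ j : ℤ, K (j + n) = K j)
    (Cf : ℤ → ℂ)
    (hCf : ∀ k : ℤ, Cf k = ∑ j ∈ Finset.range n, K j * eps n ^ (k * j))
    (H : ℤ → ℕ → ℂ → ℂ → ℂ → ℂ)
    (hH : ∀ (p : ℤ) (q lam γ : ℂ), γ ≠ 1 → lam ≠ γ →
      (PowerSeries.C lam * expPS 1 - PowerSeries.C γ) *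
          PowerSeries.mk (fun m => H p m q lam γ / m.factorial)
        = PowerSeries.C ((1 - γ) ^ p) * expPS q)
    (B : ℕ → ℂ → ℂ → ℂ)
    (hB : ∀ (q lam : ℂ), lam ≠ 1 →
      (PowerSeries.C lam * expPS 1 - 1) *
          PowerSeries.mk (fun m => B m q lam / m.factorial)
        = PowerSeries.X * expPS q)
    (r p : ℤ) (q lam : ℂ) (hlam : lam ^ n ≠ 1) (m : ℕ) (hm : 1 ≤ m) :
    (-1 : ℂ) ^ (p - 1) * m * dedekindE H n m r p ((n : ℂ) * q) lam Cf
      = Cf 0 * B m ((n : ℂ) * q) lam -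
          (n : ℂ) ^ m * ∑ j ∈ Finset.range n,
            K ((j : ℤ) - r - p + 1) * lam ^ j * B m (q + j / n) (lam ^ n) := by
  obtain ⟨m', rfl⟩ : ∃ m', m = m' + 1 := ⟨m - 1, by omega⟩
  have hcore := core hn K hK Cf hCf H hH B hB r p q lam hlam
  have hfac : ((m'.factorial : ℕ) : ℂ) ≠ 0 := Nat.cast_ne_zero.mpr m'.factorial_ne_zero
  have hfacS : (((m' + 1).factorial : ℕ) : ℂ) ≠ 0 :=
    Nat.cast_ne_zero.mpr (m' + 1).factorial_ne_zero
  set F : ℂ := (((m' + 1).factorial : ℕ) : ℂ) with hF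
  have hgoalL : (-1 : ℂ) ^ (p - 1) * ((m' + 1 : ℕ) : ℂ) *
        dedekindE H n (m' + 1) r p ((n : ℂ) * q) lam Cf
      = F * (PowerSeries.coeff (m' + 1)) (∑ k ∈ Finset.Ico 1 n,
          PowerSeries.C (eps n ^ (-(k:ℤ) * r) * Cf (-(k:ℤ)) / (1 - eps n ^ (k:ℤ)) ^ p *
              (-1:ℂ) ^ (p-1)) *
            (PowerSeries.X *
              PowerSeries.mk (fun m => H p m ((n:ℂ) * q) lam (eps n ^ (-(k:ℤ))) /
                m.factorial))) := by
    simp only [dedekindE, map_sum, PowerSeries.coeff_C_mul, PowerSeries.coeff_succ_X_mul,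
      PowerSeries.coeff_mk, Nat.add_sub_cancel]
    rw [Finset.mul_sum, Finset.mul_sum]
    refine Finset.sum_congr rfl fun k hk => ?_
    rw [hF, Nat.factorial_succ]
    push_cast
    linear_combination (-((-1:ℂ)^(p-1) * ((m':ℂ) + 1) *
      (eps n ^ (-(k:ℤ) * r) * Cf (-(k:ℤ)) / (1 - eps n ^ (k:ℤ)) ^ p) *
      H p m' ((n:ℂ) * q) lam (eps n ^ (-(k:ℤ))))) * (mul_inv_cancel₀ hfac)
  have hgoalR : Cf 0 * B (m' + 1) ((n : ℂ) * q) lam -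
        (n : ℂ) ^ (m' + 1) * ∑ j ∈ Finset.range n,
          K ((j : ℤ) - r - p + 1) * lam ^ j * B (m' + 1) (q + j / n) (lam ^ n)
      = F * (PowerSeries.coeff (m' + 1))
          (PowerSeries.C (Cf 0) * PowerSeries.mk (fun m => B m ((n:ℂ) * q) lam / m.factorial)
            - ∑ j ∈ range n, PowerSeries.C (K ((j:ℤ) - r - p + 1) * lam ^ j) *
                PowerSeries.rescale (n:ℂ)
                  (PowerSeries.mk (fun m => B m (q + j / n) (lam ^ n) / m.factorial))) := by
    simp only [map_sub, map_sum, PowerSeries.coeff_C_mul, PowerSeries.coeff_rescale,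
      PowerSeries.coeff_mk]
    rw [mul_sub]
    congr 1
    · rw [hF]
      linear_combination (-(Cf 0 * B (m' + 1) ((n:ℂ) * q) lam)) * (mul_inv_cancel₀ hfacS)
    · rw [Finset.mul_sum, Finset.mul_sum]
      refine Finset.sum_congr rfl fun j hj => ?_
      rw [hF]
      linear_combination (-(K ((j:ℤ) - r - p + 1) * lam ^ j * (n:ℂ) ^ (m' + 1) *
        B (m' + 1) (q + j / n) (lam ^ n))) * (mul_inv_cancel₀ hfacS)
  rw [hgoalL, hgoalR, hcore]
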